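/- The image of the polynomial map φ : ℂ² → ℂ⁴, φ(u,v) = (u, v², u·v, u²), equals the algebraic set S_P = {(p,q,r,s) ∈ ℂ⁴ : p² = s and q·s = r²}; in particular S_P is an irreducible affine algebraic surface, and together with the rational map ψ(p,q,r,s) = (p, r/p) this exhibits S_P as birationally equivalent to ℂ². -/
import Mathlib


/-- The surface `S_P = {(p,q,r,s) : p² = s, q·s = r²} ⊂ ℂ⁴`. -/
def SP : Set (ℂ × ℂ × ℂ × ℂ) :=
  {x | x.1 ^ 2 = x.2.2.2 ∧ x.2.1 * x.2.2.2 = x.2.2.1 ^ 2}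

/-- The polynomial parametrization `φ(u,v) = (u, v², uv, u²)` of `S_P`. -/
noncomputable def phiSP (u v : ℂ) : ℂ × ℂ × ℂ × ℂ := (u, v ^ 2, u * v, u ^ 2)

open MvPolynomial

private lemma aeval_eq_eval' {τ : Type} (x : τ → ℂ) (p : MvPolynomial τ ℂ) :
    aeval x p = eval x p := by
  rw [aeval_def, eval, coe_eval₂Hom, Algebra.algebraMap_self]

private lemma sqr_div (p q r s : ℂ) (hp : p ≠ 0) (h1 : p ^ 2 = s)
    (h2 : q * s = r ^ 2) : (r / p) ^ 2 = q := by
  have hs : s = p ^ 2 := h1.symm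
  rw [div_pow, ← hs, ← h2, mul_div_assoc, div_self (hs ▸ pow_ne_zero 2 hp), mul_one]

private lemma image_eq_SP :
    {x : ℂ × ℂ × ℂ × ℂ | ∃ u v : ℂ, phiSP u v = x} = SP := by
  ext ⟨p, q, r, s⟩
  constructor
  · rintro ⟨u, v, h⟩
    simp only [phiSP, Prod.mk.injEq] at h
    obtain ⟨rfl, rfl, rfl, rfl⟩ := h
    constructor <;> ring
  · rintro ⟨h1, h2⟩
    simp only [SP, Set.mem_setOf_eq] at h1 h2
    by_cases hp : p = 0
    · subst hp
      obtain ⟨v, hv⟩ := IsAlgClosed.exists_pow_nat_eq q (n := 2) (by norm_num)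
      refine ⟨0, v, ?_⟩
      have hs : s = 0 := by rw [← h1]; ring
      have hr : r = 0 := by
        have : r ^ 2 = 0 := by rw [← h2, hs]; ring
        exact pow_eq_zero_iff (by norm_num) |>.mp this
      simp [phiSP, hv, hs, hr]
    · refine ⟨p, r / p, ?_⟩
      have hq := sqr_div p q r s hp h1 h2
      have hs : s = p ^ 2 := h1.symm
      simp [phiSP, hq, hs, mul_div_cancel₀ _ hp]

private noncomputable def subst : Fin 4 → MvPolynomial (Fin 2) ℂ :=
  ![X 0, (X 1) ^ 2, X 0 * X 1, (X 0) ^ 2]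

private lemma key (h : MvPolynomial (Fin 4) ℂ) (x : Fin 2 → ℂ) :
    eval x (bind₁ subst h) = eval ![x 0, (x 1) ^ 2, x 0 * x 1, (x 0) ^ 2] h := by
  rw [← aeval_eq_eval', ← aeval_eq_eval', aeval_bind₁]
  have hvec : (fun i => aeval x (subst i)) = ![x 0, (x 1) ^ 2, x 0 * x 1, (x 0) ^ 2] := by
    funext i; fin_cases i <;> simp [subst]
  rw [hvec]

private lemma eval_phi (h : MvPolynomial (Fin 4) ℂ) (u v : ℂ) :
    eval ![(phiSP u v).1, (phiSP u v).2.1, (phiSP u v).2.2.1, (phiSP u v).2.2.2] h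
      = eval (![u, v] : Fin 2 → ℂ) (bind₁ subst h) := by
  rw [key]
  rfl

theorem SP_parametrized_irreducible_birational :
    {x : ℂ × ℂ × ℂ × ℂ | ∃ u v : ℂ, phiSP u v = x} = SP ∧
    (∀ f g : MvPolynomial (Fin 4) ℂ,
      (∀ x ∈ SP, MvPolynomial.eval ![x.1, x.2.1, x.2.2.1, x.2.2.2] (f * g) = 0) →
      (∀ x ∈ SP, MvPolynomial.eval ![x.1, x.2.1, x.2.2.1, x.2.2.2] f = 0) ∨
      (∀ x ∈ SP, MvPolynomial.eval ![x.1, x.2.1, x.2.2.1, x.2.2.2] g = 0)) ∧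
    (∀ u v : ℂ, u ≠ 0 → ((phiSP u v).1, (phiSP u v).2.2.1 / (phiSP u v).1) = (u, v)) ∧
    (∀ x ∈ SP, x.1 ≠ 0 → phiSP x.1 (x.2.2.1 / x.1) = x) := by
  refine ⟨image_eq_SP, ?_, ?_, ?_⟩
  · intro f g hfg
    have hmem : ∀ u v : ℂ, phiSP u v ∈ SP := by
      intro u v
      rw [← image_eq_SP]; exact ⟨u, v, rfl⟩
    have hprod : bind₁ subst f * bind₁ subst g = 0 := by
      rw [← map_mul]
      apply MvPolynomial.funext
      intro x
      have hx2 : (![x 0, x 1] : Fin 2 → ℂ) = x := by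
        funext i; fin_cases i <;> rfl
      rw [map_zero, ← hx2, ← eval_phi]
      exact hfg _ (hmem (x 0) (x 1))
    have himg : ∀ x ∈ SP, ∃ u v : ℂ, phiSP u v = x := by
      intro x hx
      rw [← image_eq_SP] at hx
      exact hx
    rcases mul_eq_zero.mp hprod with h0 | h0
    · left
      intro x hx
      obtain ⟨u, v, rfl⟩ := himg x hx
      rw [eval_phi, h0, map_zero]
    · right
      intro x hx
      obtain ⟨u, v, rfl⟩ := himg x hx
      rw [eval_phi, h0, map_zero]
  · intro u v hu
    simp [phiSP, mul_div_cancel_left₀ _ hu]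
  · rintro ⟨p, q, r, s⟩ hx hp
    obtain ⟨h1, h2⟩ := hx
    simp only at h1 h2 hp ⊢
    have hq := sqr_div p q r s hp h1 h2
    have hs : s = p ^ 2 := h1.symm
    simp [phiSP, hq, hs, mul_div_cancel₀ _ hp]
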